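/- For every odd prime p, there exists a set of p(p−1) permutations of Z/pZ such that every ordered triple of pairwise distinct elements of Z/pZ occurs as a contiguous subsequence of exactly one permutation in the set (a (p,3)-permutation design). -/

import Mathlib

/-!
The design is the orbit of the zigzag sequence `z = (0, 1, -1, 2, -2, …)` under the affine
maps `x ↦ a x + b` of `ZMod p`; for odd `p` its first `p` terms are distinct mod `p`, so it is
a permutation. The differences `dₖ = z (k + 1) - z k = (-1)ᵏ (k + 1)` satisfy
`(k + 1) dₖ₊₁ + (k + 2) dₖ = 0`, so if the window of `a z + b` at position `i` is
`(t₀, t₁, t₂)`, then `(i + 1) (t₂ - t₀) + (t₁ - t₀) = 0`. For distinct `tⱼ` this fixes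
`i + 1 = -(t₁ - t₀) / (t₂ - t₀)`, which is neither `0` nor `-1`, hence exactly one admissible
`i < p - 2`; then `a` and `b` are determined by the first two entries of the window.
-/

def zigzag (k : ℕ) : ℤ :=
  if k % 2 = 0 then -((k / 2 : ℕ) : ℤ) else ((k / 2 + 1 : ℕ) : ℤ)

lemma zigzag_succ_sub (k : ℕ) : zigzag (k + 1) - zigzag k = (-1) ^ k * (k + 1) := by
  rcases Nat.even_or_odd' k with ⟨m, rfl | rfl⟩
  · have h : (2 * m + 1) % 2 ≠ 0 := by omega
    simp only [zigzag, Nat.mul_mod_right, if_pos, if_neg h, pow_mul, neg_one_sq, one_pow,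
      Nat.mul_div_cancel_left m two_pos, show (2 * m + 1) / 2 = m by omega]
    push_cast
    ring
  · have h : (2 * m + 1) % 2 ≠ 0 := by omega
    have h' : (2 * m + 1 + 1) % 2 = 0 := by omega
    simp only [zigzag, if_pos h', if_neg h, pow_succ, pow_mul,
      show (2 * m + 1) / 2 = m by omega, show (2 * m + 1 + 1) / 2 = m + 1 by omega]
    push_cast
    ring

lemma zigzag_diff_recurrence (k : ℕ) :
    (k + 1 : ℤ) * (zigzag (k + 2) - zigzag (k + 1)) + (k + 2) * (zigzag (k + 1) - zigzag k) =
      0 := by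
  rw [zigzag_succ_sub, zigzag_succ_sub]
  push_cast
  ring

lemma intCast_zigzag_inj_of_lt {p : ℕ} (hodd : Odd p) {k l : ℕ} (hk : k < p) (hl : l < p)
    (h : (zigzag k : ZMod p) = zigzag l) : k = l := by
  obtain ⟨m, rfl⟩ := hodd
  rw [ZMod.intCast_eq_intCast_iff_dvd_sub] at h
  have hlt : |zigzag l - zigzag k| < ((2 * m + 1 : ℕ) : ℤ) := by
    rw [abs_lt]
    unfold zigzag
    constructor <;> split_ifs <;> omega
  have := Int.eq_zero_of_abs_lt_dvd h hlt
  unfold zigzag at this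
  split_ifs at this <;> omega

lemma intCast_zigzag_succ_ne {p k : ℕ} (hk : k + 1 < p) :
    (zigzag (k + 1) : ZMod p) ≠ zigzag k := by
  intro h
  have hdiff := congrArg (Int.cast : ℤ → ZMod p) (zigzag_succ_sub k)
  rw [Int.cast_sub, h, sub_self] at hdiff
  have hk0 : ((k + 1 : ℕ) : ZMod p) ≠ 0 := by
    rw [Ne, ZMod.natCast_eq_zero_iff]
    exact Nat.not_dvd_of_pos_of_lt k.succ_pos hk
  push_cast at hdiff hk0
  exact hk0 (((isUnit_neg_one (α := ZMod p)).pow k).mul_right_eq_zero.mp hdiff.symm)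

lemma eq_and_eq_of_mul_add_eq_mul_add {R : Type*} [CommRing R] [IsDomain R] {a b a' b' x y : R}
    (hxy : x ≠ y) (hx : a * x + b = a' * x + b') (hy : a * y + b = a' * y + b') :
    a = a' ∧ b = b' := by
  have ha : a = a' := by
    have h : (a - a') * (x - y) = 0 := by linear_combination hx - hy
    exact sub_eq_zero.mp ((mul_eq_zero.mp h).resolve_right (sub_ne_zero.mpr hxy))
  subst ha
  exact ⟨rfl, add_left_cancel hx⟩

lemma ExistsUnique.prod_of_fiberwise {α β : Type*} {P : β → Prop} {R : α → β → Prop}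
    (hP : ∃! b, P b) (hRP : ∀ a b, R a b → P b) (hR : ∀ b, P b → ∃! a, R a b) :
    ∃! q : α × β, R q.1 q.2 := by
  obtain ⟨b, hb, hb_uniq⟩ := hP
  obtain ⟨a, ha, ha_uniq⟩ := hR b hb
  refine ⟨(a, b), ha, fun ⟨a', b'⟩ h => ?_⟩
  obtain rfl := hb_uniq b' (hRP a' b' h)
  rw [ha_uniq a' h]

lemma existsUnique_natCast_succ_eq {n : ℕ} [NeZero n] {w : ZMod n} (hw : w ≠ 0)
    (hw' : w + 1 ≠ 0) : ∃! i : Fin (n - 2), ((i + 1 : ℕ) : ZMod n) = w := by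
  have hval : w.val + 1 ≠ n := fun h => hw' (by
    rw [← ZMod.natCast_zmod_val w, ← Nat.cast_add_one, h, ZMod.natCast_self])
  have hval0 : w.val ≠ 0 := fun h => hw ((ZMod.val_eq_zero w).mp h)
  have hlt := ZMod.val_lt w
  refine ⟨⟨w.val - 1, by omega⟩, ?_, fun i hi => Fin.ext ?_⟩
  · change ((w.val - 1 + 1 : ℕ) : ZMod n) = w
    rw [Nat.sub_add_cancel (Nat.one_le_iff_ne_zero.mpr hval0), ZMod.natCast_zmod_val]
  · show (i : ℕ) = w.val - 1
    have := congrArg ZMod.val hi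
    rw [ZMod.val_natCast_of_lt (by omega)] at this
    omega

lemma window_index_eq_of_affine_zigzag {R : Type*} [CommRing R] {a b : R} {t : Fin 3 → R}
    {i : ℕ}
    (h : ∀ j : Fin 3, a * zigzag (i + j) + b = t j) :
    ((i + 1 : ℕ) : R) * (t 2 - t 0) + (t 1 - t 0) = 0 := by
  have hrec := congrArg (Int.cast : ℤ → R) (zigzag_diff_recurrence i)
  have h0 := h 0
  have h1 := h 1
  have h2 := h 2
  simp only [Fin.isValue, Fin.val_zero, Fin.val_one, Fin.val_two, add_zero] at h0 h1 h2
  push_cast at hrec ⊢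
  linear_combination a * hrec - (i + 1) * h2 + (i + 1) * h0 - h1 + h0

lemma existsUnique_affine_zigzag_window {p : ℕ} [Fact p.Prime] {t : Fin 3 → ZMod p}
    (ht : t 1 ≠ t 0) {i : ℕ} (hi : i + 2 < p)
    (hcond : ((i + 1 : ℕ) : ZMod p) * (t 2 - t 0) + (t 1 - t 0) = 0) :
    ∃! g : (ZMod p)ˣ × ZMod p, ∀ j : Fin 3, (g.1 : ZMod p) * zigzag (i + j) + g.2 = t j := by
  have hd : (zigzag (i + 1) : ZMod p) - zigzag i ≠ 0 :=
    sub_ne_zero.mpr (intCast_zigzag_succ_ne (by omega))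
  set a : ZMod p := (t 1 - t 0) / ((zigzag (i + 1) : ZMod p) - zigzag i)
  have had : a * ((zigzag (i + 1) : ZMod p) - zigzag i) = t 1 - t 0 := div_mul_cancel₀ _ hd
  have ha : a ≠ 0 := div_ne_zero (sub_ne_zero.mpr ht) hd
  clear_value a
  have hi0 : ((i + 1 : ℕ) : ZMod p) ≠ 0 := by
    rw [Ne, ZMod.natCast_eq_zero_iff]
    exact Nat.not_dvd_of_pos_of_lt i.succ_pos (by omega)
  refine ⟨(Units.mk0 a ha, t 0 - a * zigzag i), fun j => ?_, fun g hg => ?_⟩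
  · have hrec := congrArg (Int.cast : ℤ → ZMod p) (zigzag_diff_recurrence i)
    push_cast at hrec hcond hi0
    fin_cases j
    · simp
    · simp only [Units.val_mk0, Fin.mk_one]
      linear_combination had
    · refine mul_left_cancel₀ hi0 ?_
      simp only [Units.val_mk0, Fin.reduceFinMk]
      linear_combination a * hrec - hcond - had
  · have h0 : (g.1 : ZMod p) * zigzag i + g.2 = a * zigzag i + (t 0 - a * zigzag i) := by
      simpa using hg 0
    have h1 : (g.1 : ZMod p) * zigzag (i + 1) + g.2 =
        a * zigzag (i + 1) + (t 0 - a * zigzag i) := by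
      linear_combination hg 1 - had
    obtain ⟨ha', hb'⟩ := eq_and_eq_of_mul_add_eq_mul_add (sub_ne_zero.mp hd).symm h0 h1
    exact Prod.ext (Units.ext ha') hb'

lemma existsUnique_window_index {p : ℕ} [Fact p.Prime] {t : Fin 3 → ZMod p}
    (ht : Function.Injective t) :
    ∃! i : Fin (p - 2), ((i + 1 : ℕ) : ZMod p) * (t 2 - t 0) + (t 1 - t 0) = 0 := by
  have h10 : t 1 - t 0 ≠ 0 := sub_ne_zero.mpr (ht.ne (by decide))
  have h20 : t 2 - t 0 ≠ 0 := sub_ne_zero.mpr (ht.ne (by decide))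
  have h21 : t 2 - t 1 ≠ 0 := sub_ne_zero.mpr (ht.ne (by decide))
  have hw : -(t 1 - t 0) / (t 2 - t 0) ≠ 0 := div_ne_zero (neg_ne_zero.mpr h10) h20
  have hw' : -(t 1 - t 0) / (t 2 - t 0) + 1 ≠ 0 := by
    rw [show -(t 1 - t 0) / (t 2 - t 0) + 1 = (t 2 - t 1) / (t 2 - t 0) by field_simp; ring]
    exact div_ne_zero h21 h20
  refine (existsUnique_congr fun i => ?_).mp (existsUnique_natCast_succ_eq hw hw')
  rw [eq_div_iff h20]
  constructor <;> intro h <;> linear_combination h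

theorem existsUnique_affine_zigzag_occurrence {p : ℕ} [Fact p.Prime] {t : Fin 3 → ZMod p}
    (ht : Function.Injective t) :
    ∃! q : ((ZMod p)ˣ × ZMod p) × Fin (p - 2),
      ∀ j : Fin 3, (q.1.1 : ZMod p) * zigzag (q.2 + j) + q.1.2 = t j :=
  ExistsUnique.prod_of_fiberwise (existsUnique_window_index ht)
    (fun _ _ => window_index_eq_of_affine_zigzag)
    (fun i => existsUnique_affine_zigzag_window (ht.ne (by decide)) (by omega))

noncomputable def zigzagEquiv (p : ℕ) [NeZero p] (hodd : Odd p) : Fin p ≃ ZMod p :=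
  Equiv.ofBijective (fun k => (zigzag k : ZMod p)) <| by
    rw [Fintype.bijective_iff_injective_and_card, ZMod.card, Fintype.card_fin]
    exact ⟨fun k l h => Fin.ext (intCast_zigzag_inj_of_lt hodd k.isLt l.isLt h), rfl⟩

def affinePerm {R : Type*} [Ring R] (g : Rˣ × R) : Equiv.Perm R :=
  (Units.mulLeft g.1).trans (Equiv.addRight g.2)

theorem injective_of_existsUnique_occurrence {ι α : Type*} {n : ℕ} (hn : 3 ≤ n)
    (L : ι → (Fin n ≃ α))
    (hL : ∀ t : Fin 3 → α, Function.Injective t →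
      ∃! q : ι × Fin (n - 2), ∀ j : Fin 3,
        L q.1 ⟨q.2.val + j.val, by have := q.2.isLt; have := j.isLt; omega⟩ = t j) :
    Function.Injective L := by
  intro q q' h
  let i₀ : Fin (n - 2) := ⟨0, by omega⟩
  have ht : Function.Injective fun j : Fin 3 => L q ⟨i₀.val + j.val, by omega⟩ :=
    fun j j' hj => Fin.ext (by simpa using (L q).injective hj)
  obtain ⟨_, _, huniq⟩ := hL _ ht
  have hq := huniq (q, i₀) fun _ => rfl
  have hq' := huniq (q', i₀) fun _ => by rw [h]
  exact congrArg Prod.fst (hq.trans hq'.symm)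

/-- For every odd prime `p` there exists a `(p,3)`-permutation design: a family of
`p(p-1)` distinct permutations of `Z/pZ` such that every ordered triple of pairwise
distinct elements occurs as a contiguous subsequence of exactly one permutation,
in exactly one position. -/
theorem stmt_9 (p : ℕ) (hp : p.Prime) (hodd : Odd p) :
    ∃ L : Fin (p * (p - 1)) → (Fin p ≃ ZMod p), Function.Injective L ∧
      ∀ t : Fin 3 → ZMod p, Function.Injective t →
        ∃! q : Fin (p * (p - 1)) × Fin (p - 2), ∀ j : Fin 3,
          L q.1 ⟨q.2.val + j.val, by have := q.2.isLt; have := j.isLt; omega⟩ = t j := by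
  have : Fact p.Prime := ⟨hp⟩
  have hp3 : 3 ≤ p := by
    obtain ⟨m, rfl⟩ := hodd
    have := hp.two_le
    omega
  have hcard : Fintype.card (Fin (p * (p - 1))) = Fintype.card ((ZMod p)ˣ × ZMod p) := by
    simp [ZMod.card, ZMod.card_units_eq_totient, Nat.totient_prime hp, Nat.mul_comm]
  let e := Fintype.equivOfCardEq hcard
  let L : Fin (p * (p - 1)) → (Fin p ≃ ZMod p) := fun q =>
    (zigzagEquiv p hodd).trans (affinePerm (e q))
  have hL : ∀ t : Fin 3 → ZMod p, Function.Injective t →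
      ∃! q : Fin (p * (p - 1)) × Fin (p - 2), ∀ j : Fin 3,
        L q.1 ⟨q.2.val + j.val, by have := q.2.isLt; have := j.isLt; omega⟩ = t j := fun t ht =>
    ((e.prodCongr (Equiv.refl _)).existsUnique_congr fun _ => Iff.rfl).mpr
      (existsUnique_affine_zigzag_occurrence ht)
  exact ⟨L, injective_of_existsUnique_occurrence hp3 L hL, hL⟩
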